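/- arXiv:1701.08662 — 3 statements merged into one kernel-verified Lean document; each statement's English description precedes it below -/
import Mathlib

section
/- If U is a nonprincipal ultrafilter on ω, then the ultrapower ℝ^ω/U is an η₁-ordering: for any countable subsets A, B of the ultrapower with every element of A less than every element of B, there exists an element strictly between A and B. -/
open Filter

private lemma eta1_cof_le (U : Ultrafilter ℕ) (hU : ∀ a : ℕ, U ≠ pure a) :
    (U : Filter ℕ) ≤ Filter.cofinite := by
  intro s hs
  by_contra h
  have h2 : sᶜ ∈ U := Ultrafilter.compl_mem_iff_notMem.mpr h
  obtain ⟨a, -, ha⟩ := Ultrafilter.eq_pure_of_finite_mem hs h2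
  exact hU a ha

private lemma eta1_ge (U : Ultrafilter ℕ)
    (hcof : (U : Filter ℕ) ≤ Filter.cofinite) (n : ℕ) :
    ∀ᶠ k in (U : Filter ℕ), n ≤ k :=
  (Filter.eventually_cofinite.mpr
    ((Set.finite_Iio n).subset fun x hx => lt_of_not_ge hx)).filter_mono hcof

private lemma eta1_core (U : Ultrafilter ℕ)
    (hcof : (U : Filter ℕ) ≤ Filter.cofinite) (f g : ℕ → ℕ → ℝ)
    (hfg : ∀ i j : ℕ, ∀ᶠ k in (U : Filter ℕ), f i k < g j k) :
    ∃ h : ℕ → ℝ, ∀ n : ℕ,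
      (∀ᶠ k in (U : Filter ℕ), f n k < h k) ∧
      (∀ᶠ k in (U : Filter ℕ), h k < g n k) := by
  classical
  set F : ℕ → ℕ → ℝ := fun m k => (Finset.range (m+1)).sup' (by simp) (fun i => f i k) with hF
  set G : ℕ → ℕ → ℝ := fun m k => (Finset.range (m+1)).inf' (by simp) (fun j => g j k) with hG
  set P : ℕ → ℕ → Prop := fun k m => F m k < G m k with hP
  set M : ℕ → ℕ := fun k => Nat.findGreatest (P k) k with hM
  set h : ℕ → ℝ := fun k => if P k (M k) then (F (M k) k + G (M k) k)/2 else 0 with hh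
  refine ⟨h, fun n => ?_⟩
  have h2 : ∀ᶠ k in (U : Filter ℕ),
      ∀ i ∈ Finset.range (n+1), ∀ j ∈ Finset.range (n+1), f i k < g j k := by
    rw [Filter.eventually_all_finset]
    intro i _
    rw [Filter.eventually_all_finset]
    intro j _
    exact hfg i j
  have key : ∀ᶠ k in (U : Filter ℕ), f n k < h k ∧ h k < g n k := by
    filter_upwards [eta1_ge U hcof n, h2] with k hk1 hk2
    have Pn : P k n := by
      rw [hP]
      simp only [hF, hG]
      rw [Finset.sup'_lt_iff]
      intro i hi
      rw [Finset.lt_inf'_iff]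
      intro j hj
      exact hk2 i hi j hj
    have hMn : n ≤ M k := Nat.le_findGreatest hk1 Pn
    have hPM : P k (M k) := Nat.findGreatest_spec hk1 Pn
    have hval : h k = (F (M k) k + G (M k) k)/2 := if_pos hPM
    have hle1 : f n k ≤ F (M k) k :=
      Finset.le_sup' (fun i => f i k) (Finset.mem_range.mpr (Nat.lt_succ_of_le hMn))
    have hle2 : G (M k) k ≤ g n k :=
      Finset.inf'_le (fun j => g j k) (Finset.mem_range.mpr (Nat.lt_succ_of_le hMn))
    have hlt : F (M k) k < G (M k) k := hPM
    constructor
    · rw [hval]; linarith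
    · rw [hval]; linarith
  exact ⟨key.mono fun k hk => hk.1, key.mono fun k hk => hk.2⟩

/-- If `U` is a nonprincipal ultrafilter on `ω`, the ultrapower `ℝ^ω/U` is an
`η₁`-ordering: between any countable subsets `A < B` there is an element. -/
theorem ultrapower_eta1 (U : Ultrafilter ℕ) (hU : ∀ a : ℕ, U ≠ pure a)
    (A B : Set (Filter.Germ (U : Filter ℕ) ℝ))
    (hA : A.Countable) (hB : B.Countable)
    (hAB : ∀ a ∈ A, ∀ b ∈ B, a < b) :
    ∃ x : Filter.Germ (U : Filter ℕ) ℝ, (∀ a ∈ A, a < x) ∧ (∀ b ∈ B, x < b) := by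
  classical
  have hcof := eta1_cof_le U hU
  rcases A.eq_empty_or_nonempty with hAe | hAne
  · rcases B.eq_empty_or_nonempty with hBe | hBne
    · exact ⟨0, by simp [hAe], by simp [hBe]⟩
    · -- A empty, B nonempty: find x below all of B
      obtain ⟨β, hβ⟩ := Set.Countable.exists_eq_range hB hBne
      choose g hg using fun n => Quotient.exists_rep (β n)
      set h : ℕ → ℝ := fun k => (Finset.range (k+1)).inf' (by simp) (fun j => g j k) - 1 with hh
      refine ⟨(h : Filter.Germ (U : Filter ℕ) ℝ), by simp [hAe], ?_⟩
      intro b hb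
      rw [hβ] at hb
      obtain ⟨n, rfl⟩ := hb
      rw [← hg n]
      show (h : Filter.Germ (U : Filter ℕ) ℝ) < (g n : Filter.Germ (U : Filter ℕ) ℝ)
      rw [Filter.Germ.coe_lt]
      filter_upwards [eta1_ge U hcof n] with k hk
      have : (Finset.range (k+1)).inf' (by simp) (fun j => g j k) ≤ g n k :=
        Finset.inf'_le (fun j => g j k) (Finset.mem_range.mpr (Nat.lt_succ_of_le hk))
      simp only [hh]
      linarith
  · rcases B.eq_empty_or_nonempty with hBe | hBne
    · -- A nonempty, B empty: find x above all of A
      obtain ⟨α, hα⟩ := Set.Countable.exists_eq_range hA hAne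
      choose f hf using fun n => Quotient.exists_rep (α n)
      set h : ℕ → ℝ := fun k => (Finset.range (k+1)).sup' (by simp) (fun i => f i k) + 1 with hh
      refine ⟨(h : Filter.Germ (U : Filter ℕ) ℝ), ?_, by simp [hBe]⟩
      intro a ha
      rw [hα] at ha
      obtain ⟨n, rfl⟩ := ha
      rw [← hf n]
      show (f n : Filter.Germ (U : Filter ℕ) ℝ) < (h : Filter.Germ (U : Filter ℕ) ℝ)
      rw [Filter.Germ.coe_lt]
      filter_upwards [eta1_ge U hcof n] with k hk
      have : f n k ≤ (Finset.range (k+1)).sup' (by simp) (fun i => f i k) :=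
        Finset.le_sup' (fun i => f i k) (Finset.mem_range.mpr (Nat.lt_succ_of_le hk))
      simp only [hh]
      linarith
    · -- both nonempty
      obtain ⟨α, hα⟩ := Set.Countable.exists_eq_range hA hAne
      obtain ⟨β, hβ⟩ := Set.Countable.exists_eq_range hB hBne
      choose f hf using fun n => Quotient.exists_rep (α n)
      choose g hg using fun n => Quotient.exists_rep (β n)
      have hfg : ∀ i j : ℕ, ∀ᶠ k in (U : Filter ℕ), f i k < g j k := by
        intro i j
        have hlt : α i < β j := hAB _ (hα ▸ Set.mem_range_self i) _ (hβ ▸ Set.mem_range_self j)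
        rw [← hf i, ← hg j] at hlt
        exact Filter.Germ.coe_lt.mp hlt
      obtain ⟨h, hcore⟩ := eta1_core U hcof f g hfg
      refine ⟨(h : Filter.Germ (U : Filter ℕ) ℝ), ?_, ?_⟩
      · intro a ha
        rw [hα] at ha
        obtain ⟨n, rfl⟩ := ha
        rw [← hf n]
        exact Filter.Germ.coe_lt.mpr (hcore n).1
      · intro b hb
        rw [hβ] at hb
        obtain ⟨n, rfl⟩ := hb
        rw [← hg n]
        exact Filter.Germ.coe_lt.mpr (hcore n).2
end

section
/- Any order-preserving field isomorphism between countable subfields of two η₁-ordered real closed fields extends: given countable real closed subfields D ⊆ D*, I ⊆ I* where D*, I* are η₁-ordered real closed fields, an order isomorphism φ : D → I, and x ∈ D*, there exists y ∈ I* realizing the cut (φ[{d ∈ D : d < x}], φ[{d ∈ D : d > x}]). -/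
/-- An `η₁`-ordering: between any two countable subsets `A < B` there is an
element strictly between them. -/
def Eta1Ordering (F : Type*) [LinearOrder F] : Prop :=
  ∀ A B : Set F, A.Countable → B.Countable → (∀ a ∈ A, ∀ b ∈ B, a < b) →
    ∃ x, (∀ a ∈ A, a < x) ∧ (∀ b ∈ B, x < b)

/-- A real closed ordered field. -/
def IsRealClosedField (F : Type*) [Field F] [LinearOrder F] [IsStrictOrderedRing F] : Prop :=
  (∀ x : F, 0 ≤ x → ∃ y, y ^ 2 = x) ∧
  (∀ p : Polynomial F, Odd p.natDegree → ∃ x, p.eval x = 0)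

/-- A subfield is real closed: nonnegative elements have square roots in it and
odd degree polynomials with coefficients in it have roots in it. -/
def IsRealClosedSubfield {F : Type*} [Field F] [LinearOrder F] [IsStrictOrderedRing F] (D : Subfield F) : Prop :=
  (∀ x ∈ D, 0 ≤ x → ∃ y ∈ D, y ^ 2 = x) ∧
  (∀ p : Polynomial F, (∀ i, p.coeff i ∈ D) → Odd p.natDegree →
    ∃ x ∈ D, p.eval x = 0)

namespace Eta1Ordering

theorem exists_realize_cut {ι α β : Type*} [LinearOrder ι] [Countable ι] [LinearOrder α]
    [LinearOrder β] (hβ : Eta1Ordering β) {e : ι → α} (he : Monotone e) {f : ι → β}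
    (hf : StrictMono f) (x : α) : ∃ y : β, ∀ i, e i < x ↔ f i < y := by
  -- `x ≤ e i` rather than `x < e i` on the right covers the case where `x` is some `e i`.
  have hsep : ∀ a ∈ f '' {i | e i < x}, ∀ b ∈ f '' {i | x ≤ e i}, a < b := by
    rintro _ ⟨i, hi, rfl⟩ _ ⟨j, hj, rfl⟩
    exact hf (he.reflect_lt (lt_of_lt_of_le hi hj))
  obtain ⟨y, hlow, hhigh⟩ :=
    hβ _ _ ((Set.to_countable _).image f) ((Set.to_countable _).image f) hsep
  refine ⟨y, fun i => ⟨fun hi => hlow _ ⟨i, hi, rfl⟩, fun hiy => ?_⟩⟩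
  by_contra hix
  exact (hhigh _ ⟨i, not_lt.mp hix, rfl⟩).not_gt hiy

end Eta1Ordering

theorem cut_realized_general {F K : Type*} [Field F] [LinearOrder F] [IsStrictOrderedRing F]
    [Field K] [LinearOrder K] [IsStrictOrderedRing K]
    (hK1 : Eta1Ordering K)
    (D : Subfield F) (I : Subfield K)
    (hDc : (D : Set F).Countable)
    (φ : ↥D ≃+* ↥I) (hφ : StrictMono φ) (x : F) :
    ∃ y : K, ∀ d : ↥D, ((d : F) < x ↔ (φ d : K) < y) := by
  have : Countable D := hDc.to_subtype
  exact hK1.exists_realize_cut (Subtype.mono_coe _) (Subtype.strictMono_coe _ |>.comp hφ) x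

/-- Given countable real closed subfields `D ⊆ F`, `I ⊆ K` of `η₁`-ordered
real closed fields `F`, `K`, an order isomorphism `φ : D → I`, and `x ∈ F`,
there is `y ∈ K` realizing the cut `(φ[{d < x}], φ[{d > x}])`. -/
theorem cut_realized {F K : Type*} [Field F] [LinearOrder F] [IsStrictOrderedRing F]
    [Field K] [LinearOrder K] [IsStrictOrderedRing K]
    (hF1 : Eta1Ordering F) (hK1 : Eta1Ordering K)
    (hFrc : IsRealClosedField F) (hKrc : IsRealClosedField K)
    (D : Subfield F) (I : Subfield K)
    (hDc : (D : Set F).Countable) (hIc : (I : Set K).Countable)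
    (hDrc : IsRealClosedSubfield D) (hIrc : IsRealClosedSubfield I)
    (φ : ↥D ≃+* ↥I) (hφ : StrictMono φ) (x : F) :
    ∃ y : K, ∀ d : ↥D, ((d : F) < x ↔ (φ d : K) < y) :=
  cut_realized_general hK1 D I hDc φ hφ x
end

section
/- In the lexicographic order on functions s : ω₁ → 2 of countable support whose support has a largest element, between any two distinct elements there is a third: this order is densely ordered. -/
/-! Given `s < t` with first difference at `α`, pick `γ` beyond both `α` and the largest element
of the support of `s` (possible because `ω₁` has no largest element) and raise `s` to `1` at `γ`.
The result is again in `S(ω₁)`, with `γ` as largest support element; it lies above `s` (first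
difference at `γ`) and still below `t`, since it agrees with `s` up to `α`. -/

/-- The ordinal `ω₁`, realized as the set of ordinals below `(ℵ₁).ord`. -/
def OmegaOne : Type 1 := {o : Ordinal // o < (Cardinal.aleph 1).ord}

noncomputable instance : LinearOrder OmegaOne := Subtype.instLinearOrder _

/-- `S(ω₁)`: functions `s : ω₁ → 2` with countable support whose support has a
largest element. -/
def SOmegaOne : Type 1 :=
  {f : OmegaOne → Fin 2 //
    (Function.support f).Countable ∧
      ∃ m ∈ Function.support f, ∀ a ∈ Function.support f, a ≤ m}

/-- The lexicographic order on `S(ω₁)`: `s < t` iff `s α < t α` at the least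
`α` where they differ. -/
def SOmegaOneLt (s t : SOmegaOne) : Prop :=
  ∃ α : OmegaOne, s.1 α < t.1 α ∧ ∀ β : OmegaOne, β < α → s.1 β = t.1 β

open Function Set

instance : WellFoundedLT OmegaOne := Subtype.wellFoundedLT _

instance : NoMaxOrder OmegaOne where
  exists_gt α :=
    ⟨⟨Order.succ α.1, (Cardinal.isSuccLimit_ord (Cardinal.aleph0_le_aleph 1)).succ_lt α.2⟩,
      Order.lt_succ α.1⟩

theorem isGreatest_support_update {ι M : Type*} [LinearOrder ι] [Zero M] {f : ι → M} {γ : ι}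
    (hγ : γ ∈ upperBounds (support f)) {b : M} (hb : b ≠ 0) :
    IsGreatest (support (update f γ b)) γ := by
  rw [support_update_of_ne_zero f γ hb]
  exact ⟨mem_insert γ _, by simpa [upperBounds_insert] using hγ⟩

theorem Pi.toLex_lt_of_eqOn_Iic {ι β : Type*} [LinearOrder ι] [Preorder β] {f f' g : ι → β}
    {α : ι} (hα : f α < g α) (hfg : ∀ j < α, f j = g j) (hf' : EqOn f' f (Iic α)) :
    toLex f' < toLex g :=
  ⟨α, fun j hj => (hf' hj.le).trans (hfg j hj), (hf' (le_refl α)).trans_lt hα⟩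

theorem sOmegaOneLt_iff_toLex_lt (s t : SOmegaOne) : SOmegaOneLt s t ↔ toLex s.1 < toLex t.1 :=
  exists_congr fun _ => and_comm

/-- The lexicographic order on `S(ω₁)` is dense: between any two distinct
elements there is a third. -/
theorem sOmegaOne_densely_ordered :
    ∀ s t : SOmegaOne, SOmegaOneLt s t →
      ∃ u : SOmegaOne, SOmegaOneLt s u ∧ SOmegaOneLt u t := by
  rintro s t ⟨α, hlt, hagree⟩
  obtain ⟨hcount, m, -, hm⟩ := s.2
  obtain ⟨γ, hγ⟩ := exists_gt (max α m)
  obtain ⟨hαγ, hmγ⟩ := max_lt_iff.1 hγ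
  have hγ_bound : γ ∈ upperBounds (support s.1) := fun a ha => (hm a ha).trans hmγ.le
  have hsγ : s.1 γ = 0 := notMem_support.1 fun h => not_le_of_gt hmγ (hm γ h)
  have hu := isGreatest_support_update hγ_bound one_ne_zero
  have hcount_u : (support (update s.1 γ 1)).Countable := by
    rw [support_update_of_ne_zero _ _ one_ne_zero]
    exact hcount.insert γ
  let u : SOmegaOne := ⟨update s.1 γ 1, hcount_u, γ, hu⟩
  refine ⟨u, (sOmegaOneLt_iff_toLex_lt s u).2 ?_, (sOmegaOneLt_iff_toLex_lt u t).2 ?_⟩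
  · exact Pi.lt_toLex_update_self_iff.2 (by rw [hsγ]; decide)
  · exact Pi.toLex_lt_of_eqOn_Iic hlt hagree fun j hj => update_of_ne (hj.trans_lt hαγ).ne _ _
end
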